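/- Let ⟨B, K⟩ be an ultracontact algebra and G a grill of B. Then K^G := K ∪ { F : ∅ ≠ F ⊆ G } is an ultracontact, and it is the smallest ultracontact extending K and containing G as an element. -/
import Mathlib


variable {α : Type*} [BooleanAlgebra α]

/-- `F` supports `G`: every element of `G` has a lower bound in `F`. -/
def Supports (F G : Set α) : Prop := ∀ g ∈ G, ∃ f ∈ F, f ≤ g

/-- `F + G = { f ⊔ g : f ∈ F, g ∈ G }`. -/
def setSup (F G : Set α) : Set α := {x | ∃ f ∈ F, ∃ g ∈ G, x = f ⊔ g}

/-- Ultracontact: axioms (K0)-(K4). -/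
def IsUC (K : Set (Set α)) : Prop :=
  (∅ : Set α) ∉ K ∧
  (∀ F : Set α, (⊥ : α) ∈ F → F ∉ K) ∧
  (∀ x : α, x ≠ ⊥ → ({x} : Set α) ∈ K) ∧
  (∀ F G : Set α, Supports F G → G ≠ ∅ → F ∈ K → G ∈ K) ∧
  (∀ F G : Set α, setSup F G ∈ K → F ∈ K ∨ G ∈ K)
/-- Grill (paper definition): a non-empty stack which is join-prime. -/
def IsGrill (G : Set α) : Prop :=
  G.Nonempty ∧ (⊥ : α) ∉ G ∧ (∀ a b : α, a ∈ G → a ≤ b → b ∈ G) ∧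
    ∀ a b : α, a ⊔ b ∈ G → a ∈ G ∨ b ∈ G

theorem uc_extend_by_grill (K : Set (Set α)) (G : Set α) (hK : IsUC K)
    (hG : IsGrill G) :
    IsUC (K ∪ {F : Set α | F ≠ ∅ ∧ F ⊆ G}) ∧
    K ⊆ K ∪ {F : Set α | F ≠ ∅ ∧ F ⊆ G} ∧
    G ∈ K ∪ {F : Set α | F ≠ ∅ ∧ F ⊆ G} ∧
    ∀ K' : Set (Set α), IsUC K' → K ⊆ K' → G ∈ K' →
      K ∪ {F : Set α | F ≠ ∅ ∧ F ⊆ G} ⊆ K' := by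
  obtain ⟨hK0, hK1, hK2, hK3, hK4⟩ := hK
  obtain ⟨hGne, hGbot, hGup, hGprime⟩ := hG
  refine ⟨⟨?_, ?_, ?_, ?_, ?_⟩, ?_, ?_, ?_⟩
  · rintro (h | ⟨h, -⟩)
    · exact hK0 h
    · exact h rfl
  · rintro F hbot (h | ⟨-, hsub⟩)
    · exact hK1 F hbot h
    · exact hGbot (hsub hbot)
  · intro x hx
    exact Or.inl (hK2 x hx)
  · rintro F F' hsupp hne (h | ⟨-, hsub⟩)
    · exact Or.inl (hK3 F F' hsupp hne h)
    · refine Or.inr ⟨hne, fun g hg => ?_⟩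
      obtain ⟨f, hf, hfg⟩ := hsupp g hg
      exact hGup f g (hsub hf) hfg
  · rintro F F' (h | ⟨hne, hsub⟩)
    · rcases hK4 F F' h with h' | h'
      · exact Or.inl (Or.inl h')
      · exact Or.inr (Or.inl h')
    · obtain ⟨x, f, hf, g, hg, rfl⟩ := Set.nonempty_iff_ne_empty.2 hne
      by_cases hFG : F ⊆ G
      · exact Or.inl (Or.inr ⟨fun h => (h ▸ hf : f ∈ (∅ : Set α)), hFG⟩)
      · refine Or.inr (Or.inr ⟨fun h => (h ▸ hg : g ∈ (∅ : Set α)), fun g' hg' => ?_⟩)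
        obtain ⟨f', hf', hf'G⟩ := Set.not_subset.1 hFG
        have : f' ⊔ g' ∈ G := hsub ⟨f', hf', g', hg', rfl⟩
        rcases hGprime f' g' this with h' | h'
        · exact absurd h' hf'G
        · exact h'
  · exact Set.subset_union_left
  · exact Or.inr ⟨Set.nonempty_iff_ne_empty.1 hGne, Set.Subset.rfl⟩
  · rintro K' ⟨hK0', hK1', hK2', hK3', hK4'⟩ hKK' hGK' F (h | ⟨hne, hsub⟩)
    · exact hKK' h
    · exact hK3' G F (fun f hf => ⟨f, hsub hf, le_refl f⟩) hne hGK'
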